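/- Let M be the inversion matrix (M_{i,j} = −1 if i < j, M_{i,j} = 1 if i > j, M_{i,i} = 0) and X(π) = Σ_{1≤i<j≤n} M_{π(i),π(j)}, and for π ∈ S_n set F(π) = (1/n) Σ_{i=1}^n (X(π∘c_i) − X(π))². There exists a constant B > 0, independent of n, such that for all n ≥ 2, the variance of F(π) over uniform π ∈ S_n satisfies Var(F) ≤ B·Var(X)²/n³ (equivalently, with W = X/√Var(X) and W' = X(π∘c_I)/√Var(X), Var(E^π(W'−W)²) ≤ B/n³). -/

import Mathlib

/-- The cycle `c_i` on `Fin n` mapping `i → i+1 → ⋯ → n-1 → i` and fixing `0,…,i-1`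
(0-indexed version of the cycle on `{1,…,n}` mapping `i → i+1 → ⋯ → n → i`). -/
def cyc {n : ℕ} (i : Fin n) : Equiv.Perm (Fin n) :=
  (Fin.revPerm.trans ((Fin.cycleRange i.rev).trans Fin.revPerm)).symm

/-- The number of descents of a permutation of `Fin n`: the number of indices `i`
with `i+1 < n` and `π(i) > π(i+1)`. -/
def descents {n : ℕ} (π : Equiv.Perm (Fin n)) : ℕ :=
  (Finset.univ.filter fun i : Fin (n - 1) =>
    π ⟨i.1 + 1, by have := i.2; omega⟩ < π ⟨i.1, by have := i.2; omega⟩).card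

/-- The number of inversions of a permutation of `Fin n`: the number of pairs
`i < j` with `π(i) > π(j)`. -/
def inversions {n : ℕ} (π : Equiv.Perm (Fin n)) : ℕ :=
  (Finset.univ.filter fun p : Fin n × Fin n => p.1 < p.2 ∧ π p.2 < π p.1).card

/-- `X(π) = ∑_{i<j} M_{π(i),π(j)}`. -/
def Xstat {n : ℕ} (M : Fin n → Fin n → ℝ) (π : Equiv.Perm (Fin n)) : ℝ :=
  ∑ p ∈ Finset.univ.filter (fun p : Fin n × Fin n => p.1 < p.2), M (π p.1) (π p.2)

/-- Expectation of a statistic under the uniform measure on the symmetric group. -/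
noncomputable def permExp {n : ℕ} (f : Equiv.Perm (Fin n) → ℝ) : ℝ :=
  (∑ π : Equiv.Perm (Fin n), f π) / (n.factorial : ℝ)

/-- Variance of a statistic under the uniform measure on the symmetric group. -/
noncomputable def permVar {n : ℕ} (f : Equiv.Perm (Fin n) → ℝ) : ℝ :=
  permExp (fun π => (f π - permExp f) ^ 2)

/-- The inversion matrix: `M_{i,j} = −1` if `i < j`, `M_{i,j} = 1` if `i > j`,
and `M_{i,i} = 0`. -/
def invMat (n : ℕ) : Fin n → Fin n → ℝ := fun i j =>
  if i < j then -1 else if j < i then 1 else 0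

section AuxVarCondexp


lemma cyc_symm_val {n : ℕ} (i q : Fin n) :
    (((cyc i).symm q : Fin n) : ℕ) =
      if q.val < i.val then q.val else if q.val = i.val then n - 1 else q.val - 1 := by
  rcases n with _ | m
  · exact i.elim0
  have hq := q.isLt
  have hi := i.isLt
  have hsymm : (cyc i).symm q = Fin.rev (Fin.cycleRange i.rev (Fin.rev q)) := by
    simp [cyc, Equiv.symm_symm, Equiv.trans_apply]
  rcases Nat.lt_trichotomy q.val i.val with h | h | h
  · rw [if_pos h, hsymm, Fin.cycleRange_of_gt (by
      simp only [Fin.lt_def, Fin.val_rev]; omega), Fin.rev_rev]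
  · rw [if_neg (by omega), if_pos h, hsymm]
    have : Fin.rev q = i.rev := by
      apply Fin.ext; simp [Fin.val_rev, h]
    rw [this, Fin.cycleRange_self]
    simp [Fin.val_rev]
  · rw [if_neg (by omega), if_neg (by omega), hsymm]
    have hlt : Fin.rev q < i.rev := by
      simp only [Fin.lt_def, Fin.val_rev]; omega
    rw [Fin.cycleRange_of_lt hlt]
    have hv : ((Fin.rev q + 1 : Fin (m+1)) : ℕ) = (Fin.rev q : ℕ) + 1 := by
      rw [Fin.val_add_one_of_lt]
      exact lt_of_lt_of_le hlt (Fin.le_last _)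
    simp only [Fin.val_rev, hv]
    omega

lemma cyc_val {n : ℕ} (i q : Fin n) :
    ((cyc i q : Fin n) : ℕ) =
      if q.val < i.val then q.val else if q.val = n - 1 then i.val else q.val + 1 := by
  rcases n with _ | m
  · exact i.elim0
  have hq := q.isLt
  have hi := i.isLt
  have key : ∀ y : Fin (m+1), (cyc i).symm y = q → (y:ℕ) =
      (if q.val < i.val then q.val else if q.val = m then i.val else q.val + 1) := by
    intro y hy
    have := cyc_symm_val i y
    rw [hy] at this
    have hyv := y.isLt
    split_ifs at this ⊢ <;> omega
  have := key (cyc i q) (Equiv.symm_apply_apply _ _)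
  simpa using this



/-- `S i π = ∑_{q > i} M(π q, π i)`. -/
def Srow {n : ℕ} (i : Fin n) (π : Equiv.Perm (Fin n)) : ℝ :=
  ∑ q ∈ Finset.univ.filter (fun q => i < q), invMat n (π q) (π i)

lemma invMat_antisymm {n : ℕ} (a b : Fin n) : invMat n a b = - invMat n b a := by
  unfold invMat
  rcases lt_trichotomy a b with h | h | h
  · simp [h, not_lt_of_gt h]
  · subst h; simp
  · simp [h, not_lt_of_gt h]

lemma invMat_self {n : ℕ} (a : Fin n) : invMat n a a = 0 := by simp [invMat]

-- the set of pairs whose order is flipped by (cyc i).symm, among increasing pairs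
lemma flip_set {n : ℕ} (i : Fin n) :
    (Finset.univ.filter (fun p : Fin n × Fin n => p.1 < p.2)) \
      (Finset.univ.filter (fun p : Fin n × Fin n => (cyc i).symm p.1 < (cyc i).symm p.2))
    = ({i} : Finset (Fin n)) ×ˢ (Finset.univ.filter (fun q => i < q)) := by
  ext ⟨q1, q2⟩
  simp only [Finset.mem_sdiff, Finset.mem_filter, Finset.mem_univ, true_and,
    Finset.mem_product, Finset.mem_singleton, not_lt, Fin.lt_def, Fin.le_def]
  have h1 := cyc_symm_val i q1
  have h2 := cyc_symm_val i q2
  have b1 := q1.isLt; have b2 := q2.isLt; have bi := i.isLt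
  constructor
  · rintro ⟨hlt, hge⟩
    refine ⟨Fin.ext ?_, ?_⟩ <;> (split_ifs at h1 h2 <;> omega)
  · rintro ⟨rfl, hlt⟩
    split_ifs at h1 h2 <;> omega

lemma flip_set' {n : ℕ} (i : Fin n) :
    (Finset.univ.filter (fun p : Fin n × Fin n => (cyc i).symm p.1 < (cyc i).symm p.2)) \
      (Finset.univ.filter (fun p : Fin n × Fin n => p.1 < p.2))
    = (Finset.univ.filter (fun q => i < q)) ×ˢ ({i} : Finset (Fin n)) := by
  ext ⟨q1, q2⟩
  simp only [Finset.mem_sdiff, Finset.mem_filter, Finset.mem_univ, true_and,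
    Finset.mem_product, Finset.mem_singleton, not_lt, Fin.lt_def, Fin.le_def]
  have h1 := cyc_symm_val i q1
  have h2 := cyc_symm_val i q2
  have b1 := q1.isLt; have b2 := q2.isLt; have bi := i.isLt
  constructor
  · rintro ⟨hlt, hge⟩
    refine ⟨?_, Fin.ext ?_⟩ <;> (split_ifs at h1 h2 <;> omega)
  · rintro ⟨hlt, rfl⟩
    split_ifs at h1 h2 <;> omega

lemma Xdiff {n : ℕ} (π : Equiv.Perm (Fin n)) (i : Fin n) :
    Xstat (invMat n) (π * cyc i) - Xstat (invMat n) π = 2 * Srow i π := by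
  classical
  set A := Finset.univ.filter (fun p : Fin n × Fin n => p.1 < p.2) with hA
  set B := Finset.univ.filter
      (fun p : Fin n × Fin n => (cyc i).symm p.1 < (cyc i).symm p.2) with hB
  have hXc : Xstat (invMat n) (π * cyc i)
      = ∑ p ∈ B, invMat n (π p.1) (π p.2) := by
    unfold Xstat
    refine Finset.sum_nbij' (fun p => (cyc i p.1, cyc i p.2))
      (fun p => ((cyc i).symm p.1, (cyc i).symm p.2)) ?_ ?_ ?_ ?_ ?_
    · intro p hp
      simp only [hB, Finset.mem_filter, Finset.mem_univ, true_and,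
        Equiv.symm_apply_apply]
      exact (Finset.mem_filter.mp hp).2
    · intro p hp
      simp only [hA, Finset.mem_filter, Finset.mem_univ, true_and]
      exact (Finset.mem_filter.mp hp).2
    · intro p _; simp
    · intro p _; simp
    · intro p _; simp [Equiv.Perm.mul_apply]
  have hsub : ∑ p ∈ B, invMat n (π p.1) (π p.2) - ∑ p ∈ A, invMat n (π p.1) (π p.2)
      = ∑ p ∈ B \ A, invMat n (π p.1) (π p.2) - ∑ p ∈ A \ B, invMat n (π p.1) (π p.2) := by
    rw [← Finset.sum_inter_add_sum_sdiff B A (fun p => invMat n (π p.1) (π p.2)),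
      ← Finset.sum_inter_add_sum_sdiff A B (fun p => invMat n (π p.1) (π p.2)),
      Finset.inter_comm]
    ring
  rw [hXc, Xstat, ← hA, hsub, flip_set, flip_set']
  rw [Finset.sum_product, Finset.sum_product]
  simp only [Finset.sum_singleton]
  unfold Srow
  have : ∀ q, invMat n (π i) (π q) = - invMat n (π q) (π i) := fun q => invMat_antisymm _ _
  rw [Finset.sum_congr rfl (fun q _ => this q)]
  rw [Finset.sum_neg_distrib]
  ring

lemma cyc_fix {n : ℕ} {j x : Fin n} (h : x.val < j.val) : cyc j x = x := by
  apply Fin.ext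
  rw [cyc_val, if_pos h]

lemma cyc_window {n : ℕ} {j x : Fin n} (h : j.val ≤ x.val) : j.val ≤ (cyc j x).val := by
  have := cyc_val j x
  have := x.isLt
  split_ifs at * <;> omega

lemma cyc_symm_window {n : ℕ} {j x : Fin n} (h : j.val ≤ x.val) :
    j.val ≤ ((cyc j).symm x).val := by
  have := cyc_symm_val j x
  have := x.isLt
  have := j.isLt
  split_ifs at * <;> omega

lemma cycpow_fix {n : ℕ} {j x : Fin n} (h : x.val < j.val) (k : ℕ) : (cyc j ^ k) x = x := by
  induction k with
  | zero => simp
  | succ k ih => rw [pow_succ', Equiv.Perm.mul_apply, ih, cyc_fix h]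

lemma cycpow_window {n : ℕ} {j x : Fin n} (h : j.val ≤ x.val) (k : ℕ) :
    j.val ≤ ((cyc j ^ k) x).val := by
  induction k with
  | zero => simpa
  | succ k ih => rw [pow_succ', Equiv.Perm.mul_apply]; exact cyc_window ih

lemma cyc_inv_window {n : ℕ} {j : Fin n} : ∀ {x : Fin n}, j.val ≤ x.val →
    j.val ≤ (((cyc j)⁻¹) x).val := fun h => cyc_symm_window h

lemma cycpow_symm_window {n : ℕ} {j : Fin n} : ∀ {x : Fin n}, j.val ≤ x.val → ∀ (k : ℕ),
    j.val ≤ (((cyc j ^ k)⁻¹) x).val := by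
  intro x h k
  induction k generalizing x with
  | zero => simpa
  | succ k ih =>
      rw [pow_succ, mul_inv_rev, Equiv.Perm.mul_apply]
      exact cyc_inv_window (ih h)

lemma cycpow_symm_window_old {n : ℕ} {j x : Fin n} (h : j.val ≤ x.val) (k : ℕ) :
    j.val ≤ (((cyc j ^ k)⁻¹) x).val := by
  induction k with
  | zero => simpa
  | succ k ih => exact cycpow_symm_window h _

lemma cycpow_apply_self {n : ℕ} (j : Fin n) (k : ℕ) (hk : k < n - j.val) :
    ((cyc j ^ k) j).val = j.val + k := by
  induction k with
  | zero => simp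
  | succ k ih =>
      have hk' : k < n - j.val := by omega
      rw [pow_succ', Equiv.Perm.mul_apply]  -- c^(k+1) = c * c^k
      have hv := ih hk'
      rw [cyc_val]
      have hj := j.isLt
      rw [if_neg (by omega), if_neg (by omega)]
      omega

lemma Srow_mul_cyc {n : ℕ} {i j : Fin n} (hij : i < j) (π : Equiv.Perm (Fin n)) :
    Srow i (π * cyc j) = Srow i π := by
  unfold Srow
  have hfix : (π * cyc j) i = π i := by
    rw [Equiv.Perm.mul_apply, cyc_fix hij]
  rw [hfix]
  refine Finset.sum_nbij' (fun q => cyc j q) (fun q => (cyc j).symm q) ?_ ?_ ?_ ?_ ?_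
  · intro q hq
    simp only [Finset.mem_filter, Finset.mem_univ, true_and, Fin.lt_def] at *
    rcases Nat.lt_or_ge q.val j.val with h | h
    · rw [cyc_fix h]; exact hq
    · exact lt_of_lt_of_le hij (by exact_mod_cast cyc_window h)
  · intro q hq
    simp only [Finset.mem_filter, Finset.mem_univ, true_and, Fin.lt_def] at *
    rcases Nat.lt_or_ge q.val j.val with h | h
    · have : (cyc j).symm q = q := by
        have := cyc_symm_val j q
        rw [if_pos h] at this
        exact Fin.ext this
      rw [this]; exact hq
    · exact lt_of_lt_of_le hij (cyc_symm_window h)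
  · intro q _; simp
  · intro q _; simp
  · intro q _; simp [Equiv.Perm.mul_apply]

lemma Srow_mul_cycpow {n : ℕ} {i j : Fin n} (hij : i < j) (π : Equiv.Perm (Fin n)) (k : ℕ) :
    Srow i (π * cyc j ^ k) = Srow i π := by
  induction k with
  | zero => simp
  | succ k ih => rw [pow_succ, ← mul_assoc, Srow_mul_cyc hij, ih]

/-- window finset -/
def Wnd {n : ℕ} (j : Fin n) : Finset (Fin n) := Finset.univ.filter (fun x => j ≤ x)

/-- rank sum of `w` within the window -/
def Rnk {n : ℕ} (j : Fin n) (π : Equiv.Perm (Fin n)) (w : Fin n) : ℝ :=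
  ∑ w' ∈ (Wnd j).erase w, invMat n (π w') (π w)

lemma Srow_pow_eq_Rnk {n : ℕ} (j : Fin n) (π : Equiv.Perm (Fin n)) (k : ℕ) :
    Srow j (π * cyc j ^ k) = Rnk j π ((cyc j ^ k) j) := by
  unfold Srow Rnk Wnd
  have hfix : (π * cyc j ^ k) j = π ((cyc j ^ k) j) := by
    rw [Equiv.Perm.mul_apply]
  rw [hfix]
  refine Finset.sum_nbij' (fun q => (cyc j ^ k) q) (fun q => ((cyc j ^ k)⁻¹) q) ?_ ?_ ?_ ?_ ?_
  · intro q hq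
    simp only [Finset.mem_filter, Finset.mem_univ, true_and, Fin.lt_def] at hq
    simp only [Finset.mem_erase, Finset.mem_filter, Finset.mem_univ, true_and, Fin.le_def]
    constructor
    · intro h
      exact absurd (Equiv.injective _ h) (by intro h'; rw [h'] at hq; omega)
    · exact cycpow_window (by omega) k
  · intro q hq
    simp only [Finset.mem_erase, Finset.mem_filter, Finset.mem_univ, true_and,
      Fin.le_def] at hq
    simp only [Finset.mem_filter, Finset.mem_univ, true_and, Fin.lt_def]
    have h1 : j.val ≤ (((cyc j ^ k)⁻¹) q).val := cycpow_symm_window hq.2 k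
    rcases Nat.eq_or_lt_of_le h1 with h | h
    · exfalso
      apply hq.1
      have h2 : ((cyc j ^ k)⁻¹) q = j := Fin.ext h.symm
      have := congrArg (cyc j ^ k) h2
      have h3 : q = (cyc j ^ k) j := by simpa using this
      exact h3
    · exact h
  · intro q _; simp
  · intro q _; simp
  · intro q _; simp [Equiv.Perm.mul_apply]

lemma Wnd_card {n : ℕ} (j : Fin n) : (Wnd j).card = n - j.val := by
  unfold Wnd
  rw [show (Finset.univ.filter (fun x : Fin n => j ≤ x)) = Finset.Ici j by
    ext x; simp [Finset.mem_Ici]]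
  simpa using Fin.card_Ici j

/-- the rank of `w` in the window -/
def rnkN {n : ℕ} (j : Fin n) (π : Equiv.Perm (Fin n)) (w : Fin n) : ℕ :=
  ((Wnd j).filter (fun w' => π w' < π w)).card

lemma Rnk_eq_rank {n : ℕ} (j : Fin n) (π : Equiv.Perm (Fin n)) {w : Fin n} (hw : w ∈ Wnd j) :
    Rnk j π w = ((n - j.val - 1 : ℕ) : ℝ) - 2 * rnkN j π w := by
  unfold Rnk
  rw [← Finset.sum_filter_add_sum_filter_not ((Wnd j).erase w) (fun w' => π w' < π w)]
  have hfilter : ((Wnd j).erase w).filter (fun w' => π w' < π w)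
      = (Wnd j).filter (fun w' => π w' < π w) := by
    rw [Finset.filter_erase]
    apply Finset.erase_eq_of_notMem
    simp
  have hsum1 : ∑ w' ∈ ((Wnd j).erase w).filter (fun w' => π w' < π w),
      invMat n (π w') (π w) = -(rnkN j π w : ℝ) := by
    have hconst : ∀ w' ∈ ((Wnd j).erase w).filter (fun w' => π w' < π w),
        invMat n (π w') (π w) = -1 := by
      intro w' hw'
      simp only [Finset.mem_filter] at hw'
      unfold invMat
      rw [if_pos hw'.2]
    rw [Finset.sum_congr rfl hconst, Finset.sum_const, hfilter]
    unfold rnkN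
    simp
  have hsum2 : ∑ w' ∈ ((Wnd j).erase w).filter (fun w' => ¬ π w' < π w),
      invMat n (π w') (π w) = ((Wnd j).erase w).card - (rnkN j π w : ℝ) := by
    have hcard : (((Wnd j).erase w).filter (fun w' => ¬ π w' < π w)).card
        = ((Wnd j).erase w).card - rnkN j π w := by
      rw [Finset.filter_not, Finset.card_sdiff_of_subset (Finset.filter_subset _ _), hfilter]
      rfl
    have hconst : ∀ w' ∈ ((Wnd j).erase w).filter (fun w' => ¬ π w' < π w),
        invMat n (π w') (π w) = 1 := by
      intro w' hw'
      simp only [Finset.mem_filter, Finset.mem_erase, not_lt] at hw'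
      have hne : π w < π w' := by
        rcases lt_or_eq_of_le hw'.2 with h | h
        · exact h
        · exact absurd (Equiv.injective π h) (Ne.symm hw'.1.1)
      unfold invMat
      rw [if_neg (not_lt_of_gt hne), if_pos hne]
    have hle : rnkN j π w ≤ ((Wnd j).erase w).card := by
      unfold rnkN
      rw [← hfilter]
      exact Finset.card_filter_le _ _
    rw [Finset.sum_congr rfl hconst, Finset.sum_const, hcard]
    rw [nsmul_eq_mul, mul_one, Nat.cast_sub hle]
  rw [hsum1, hsum2, Finset.card_erase_of_mem hw, Wnd_card]
  have hc : 1 ≤ n - j.val := by have := j.isLt; omega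
  push_cast [hc]
  ring

lemma rnkN_lt {n : ℕ} (j : Fin n) (π : Equiv.Perm (Fin n)) {w : Fin n} (hw : w ∈ Wnd j) :
    rnkN j π w < n - j.val := by
  rw [← Wnd_card j]
  apply Finset.card_lt_card
  constructor
  · exact Finset.filter_subset _ _
  · intro hsub
    have := hsub hw
    simp at this

lemma rnkN_injOn {n : ℕ} (j : Fin n) (π : Equiv.Perm (Fin n)) :
    Set.InjOn (rnkN j π) (Wnd j) := by
  intro w1 h1 w2 h2 heq
  by_contra hne
  have hpne : π w1 ≠ π w2 := fun h => hne (Equiv.injective π h)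
  wlog hlt : π w1 < π w2 generalizing w1 w2
  · exact this h2 h1 heq.symm (Ne.symm hne) (fun h => hne (Equiv.injective π h).symm)
      (lt_of_le_of_ne (not_lt.mp hlt) hpne.symm)
  have : rnkN j π w1 < rnkN j π w2 := by
    apply Finset.card_lt_card
    constructor
    · intro x hx
      simp only [Finset.mem_filter] at *
      exact ⟨hx.1, lt_trans hx.2 hlt⟩
    · intro hsub
      have hw1 : w1 ∈ (Wnd j).filter (fun w' => π w' < π w2) := by
        simp only [Finset.mem_filter]; exact ⟨h1, hlt⟩
      have := hsub hw1
      simp at this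
  omega

lemma sum_window_rank {n : ℕ} (j : Fin n) (π : Equiv.Perm (Fin n)) (G : ℝ → ℝ) :
    ∑ w ∈ Wnd j, G (Rnk j π w)
      = ∑ b ∈ Finset.range (n - j.val), G (((n - j.val - 1 : ℕ) : ℝ) - 2 * b) := by
  have himg : (Wnd j).image (rnkN j π) = Finset.range (n - j.val) := by
    apply Finset.eq_of_subset_of_card_le
    · intro b hb
      simp only [Finset.mem_image] at hb
      obtain ⟨w, hw, rfl⟩ := hb
      exact Finset.mem_range.mpr (rnkN_lt j π hw)
    · rw [Finset.card_range, Finset.card_image_of_injOn (rnkN_injOn j π), Wnd_card]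
  calc ∑ w ∈ Wnd j, G (Rnk j π w)
      = ∑ w ∈ Wnd j, G (((n - j.val - 1 : ℕ) : ℝ) - 2 * rnkN j π w) := by
        exact Finset.sum_congr rfl (fun w hw => by rw [Rnk_eq_rank j π hw])
    _ = ∑ b ∈ (Wnd j).image (rnkN j π), G (((n - j.val - 1 : ℕ) : ℝ) - 2 * b) := by
        rw [Finset.sum_image (fun x hx y hy h => rnkN_injOn j π hx hy h)]
    _ = _ := by rw [himg]

lemma orbitSum {n : ℕ} (j : Fin n) (π : Equiv.Perm (Fin n)) (G : ℝ → ℝ) :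
    ∑ k ∈ Finset.range (n - j.val), G (Srow j (π * cyc j ^ k))
      = ∑ b ∈ Finset.range (n - j.val), G (((n - j.val - 1 : ℕ) : ℝ) - 2 * b) := by
  rw [← sum_window_rank j π G]
  refine Finset.sum_nbij' (fun k => (cyc j ^ k) j) (fun w => w.val - j.val) ?_ ?_ ?_ ?_ ?_
  · intro k hk
    simp only [Finset.mem_range] at hk
    unfold Wnd
    simp only [Finset.mem_filter, Finset.mem_univ, true_and, Fin.le_def]
    rw [cycpow_apply_self j k hk]
    omega
  · intro w hw
    unfold Wnd at hw
    simp only [Finset.mem_filter, Finset.mem_univ, true_and, Fin.le_def] at hw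
    simp only [Finset.mem_range]
    have := w.isLt
    omega
  · intro k hk
    simp only [Finset.mem_range] at hk
    have := cycpow_apply_self j k hk
    show ((cyc j ^ k) j).val - j.val = k
    omega
  · intro w hw
    unfold Wnd at hw
    simp only [Finset.mem_filter, Finset.mem_univ, true_and, Fin.le_def] at hw
    have hlt : w.val - j.val < n - j.val := by have := w.isLt; omega
    apply Fin.ext
    rw [cycpow_apply_self j _ hlt]
    omega
  · intro k hk
    simp only [Finset.mem_range] at hk
    rw [Srow_pow_eq_Rnk]

lemma sum_perm_mul {n : ℕ} (g : Equiv.Perm (Fin n)) (Φ : Equiv.Perm (Fin n) → ℝ) :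
    ∑ π : Equiv.Perm (Fin n), Φ (π * g) = ∑ π : Equiv.Perm (Fin n), Φ π :=
  Fintype.sum_equiv (Equiv.mulRight g) _ _ (fun _ => rfl)

lemma claimA {n : ℕ} (j : Fin n) (G : ℝ → ℝ) :
    ((n - j.val : ℕ) : ℝ) * ∑ π : Equiv.Perm (Fin n), G (Srow j π)
      = (n.factorial : ℝ) *
        ∑ b ∈ Finset.range (n - j.val), G (((n - j.val - 1 : ℕ) : ℝ) - 2 * b) := by
  have h1 : ∑ k ∈ Finset.range (n - j.val), ∑ π : Equiv.Perm (Fin n), G (Srow j (π * cyc j ^ k))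
      = ((n - j.val : ℕ) : ℝ) * ∑ π : Equiv.Perm (Fin n), G (Srow j π) := by
    rw [Finset.sum_congr rfl (fun k _ => sum_perm_mul (cyc j ^ k) (fun π => G (Srow j π)))]
    rw [Finset.sum_const, Finset.card_range, nsmul_eq_mul]
  rw [← h1, Finset.sum_comm]
  rw [Finset.sum_congr rfl (fun π _ => orbitSum j π G), Finset.sum_const]
  rw [nsmul_eq_mul]
  congr 1
  rw [Finset.card_univ, Fintype.card_perm, Fintype.card_fin]

lemma claimB {n : ℕ} {i j : Fin n} (hij : i < j) (G H : ℝ → ℝ) :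
    (n.factorial : ℝ) * ∑ π : Equiv.Perm (Fin n), G (Srow i π) * H (Srow j π)
      = (∑ π : Equiv.Perm (Fin n), G (Srow i π)) * ∑ π : Equiv.Perm (Fin n), H (Srow j π) := by
  set Sb : ℝ := ∑ b ∈ Finset.range (n - j.val), H (((n - j.val - 1 : ℕ) : ℝ) - 2 * b) with hSb
  have hc : (0 : ℝ) < ((n - j.val : ℕ) : ℝ) := by
    have := j.isLt
    have : 0 < n - j.val := by omega
    exact_mod_cast this
  have e1 : ((n - j.val : ℕ) : ℝ) * ∑ π : Equiv.Perm (Fin n), G (Srow i π) * H (Srow j π)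
      = (∑ π : Equiv.Perm (Fin n), G (Srow i π)) * Sb := by
    have h1 : ∑ k ∈ Finset.range (n - j.val),
        ∑ π : Equiv.Perm (Fin n), G (Srow i (π * cyc j ^ k)) * H (Srow j (π * cyc j ^ k))
        = ((n - j.val : ℕ) : ℝ) * ∑ π : Equiv.Perm (Fin n), G (Srow i π) * H (Srow j π) := by
      rw [Finset.sum_congr rfl (fun k _ => sum_perm_mul (cyc j ^ k)
        (fun π => G (Srow i π) * H (Srow j π)))]
      rw [Finset.sum_const, Finset.card_range, nsmul_eq_mul]
    rw [← h1, Finset.sum_comm]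
    have h2 : ∀ π : Equiv.Perm (Fin n),
        ∑ k ∈ Finset.range (n - j.val), G (Srow i (π * cyc j ^ k)) * H (Srow j (π * cyc j ^ k))
        = G (Srow i π) * Sb := by
      intro π
      rw [Finset.sum_congr rfl (fun k _ => by rw [Srow_mul_cycpow hij π k]), ← Finset.mul_sum,
        orbitSum j π H]
    rw [Finset.sum_congr rfl (fun π _ => h2 π), ← Finset.sum_mul]
  have e2 := claimA j H
  rw [← hSb] at e2
  -- combine
  have key : ((n - j.val : ℕ) : ℝ) * ((n.factorial : ℝ) *
        ∑ π : Equiv.Perm (Fin n), G (Srow i π) * H (Srow j π))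
      = ((n - j.val : ℕ) : ℝ) * ((∑ π : Equiv.Perm (Fin n), G (Srow i π)) *
        ∑ π : Equiv.Perm (Fin n), H (Srow j π)) := by
    calc ((n - j.val : ℕ) : ℝ) * ((n.factorial : ℝ) *
          ∑ π : Equiv.Perm (Fin n), G (Srow i π) * H (Srow j π))
        = (n.factorial : ℝ) * (((n - j.val : ℕ) : ℝ) *
          ∑ π : Equiv.Perm (Fin n), G (Srow i π) * H (Srow j π)) := by ring
      _ = (n.factorial : ℝ) * ((∑ π : Equiv.Perm (Fin n), G (Srow i π)) * Sb) := by rw [e1]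
      _ = (∑ π : Equiv.Perm (Fin n), G (Srow i π)) * ((n.factorial : ℝ) * Sb) := by ring
      _ = (∑ π : Equiv.Perm (Fin n), G (Srow i π)) * (((n - j.val : ℕ) : ℝ) *
          ∑ π : Equiv.Perm (Fin n), H (Srow j π)) := by rw [e2]
      _ = _ := by ring
  exact mul_left_cancel₀ (ne_of_gt hc) key

lemma sum_range_cast (k : ℕ) : ∑ b ∈ Finset.range k, (b : ℝ) = k * (k - 1) / 2 := by
  induction k with
  | zero => simp
  | succ k ih =>
      rw [Finset.sum_range_succ, ih]
      push_cast
      ring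

lemma sum_range_sq_cast (k : ℕ) :
    ∑ b ∈ Finset.range k, (b : ℝ) ^ 2 = k * (k - 1) * (2 * k - 1) / 6 := by
  induction k with
  | zero => simp
  | succ k ih =>
      rw [Finset.sum_range_succ, ih]
      push_cast
      ring

lemma sum_centered_zero (m : ℕ) :
    ∑ b ∈ Finset.range (m + 1), ((m : ℝ) - 2 * b) = 0 := by
  rw [Finset.sum_sub_distrib, Finset.sum_const, ← Finset.mul_sum, sum_range_cast,
    Finset.card_range, nsmul_eq_mul]
  push_cast
  ring

lemma sum_centered_sq (m : ℕ) :
    ∑ b ∈ Finset.range (m + 1), ((m : ℝ) - 2 * b) ^ 2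
      = (m : ℝ) * ((m : ℝ) + 1) * ((m : ℝ) + 2) / 3 := by
  have expand : ∀ b : ℕ, ((m : ℝ) - 2 * b) ^ 2
      = ((m:ℝ))^2 - 4 * (m:ℝ) * (b:ℝ) + 4 * ((b:ℝ))^2 := by
    intro b; ring
  rw [Finset.sum_congr rfl (fun b _ => expand b)]
  rw [Finset.sum_add_distrib, Finset.sum_sub_distrib, Finset.sum_const, ← Finset.mul_sum,
    ← Finset.mul_sum, sum_range_cast, sum_range_sq_cast, Finset.card_range, nsmul_eq_mul]
  push_cast
  ring

lemma srow_first_moment {n : ℕ} (j : Fin n) : ∑ π : Equiv.Perm (Fin n), Srow j π = 0 := by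
  have h := claimA j id
  simp only [id] at h
  have hj := j.isLt
  obtain ⟨m, hm⟩ : ∃ m, n - j.val = m + 1 := ⟨n - j.val - 1, by omega⟩
  rw [hm] at h
  simp only [Nat.add_sub_cancel] at h
  rw [sum_centered_zero m, mul_zero] at h
  rcases mul_eq_zero.mp h with h' | h'
  · exfalso
    have : ((m + 1 : ℕ) : ℝ) ≠ 0 := by positivity
    exact this h'
  · exact h'

lemma srow_second_moment {n : ℕ} (j : Fin n) :
    ∑ π : Equiv.Perm (Fin n), (Srow j π) ^ 2
      = (n.factorial : ℝ) * (((n - 1 - j.val : ℕ) : ℝ) * (((n - 1 - j.val : ℕ) : ℝ) + 2) / 3) := by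
  have h := claimA j (fun x => x ^ 2)
  have hj := j.isLt
  obtain ⟨m, hm⟩ : ∃ m, n - j.val = m + 1 := ⟨n - j.val - 1, by omega⟩
  rw [hm] at h
  simp only [Nat.add_sub_cancel] at h
  rw [sum_centered_sq m] at h
  rw [show n - 1 - j.val = m from by omega]
  have hc : ((m + 1 : ℕ) : ℝ) ≠ 0 := by positivity
  apply mul_left_cancel₀ hc
  rw [h]
  push_cast
  ring



lemma card_perm_fin (n : ℕ) :
    (Finset.univ : Finset (Equiv.Perm (Fin n))).card = n.factorial := by
  rw [Finset.card_univ, Fintype.card_perm, Fintype.card_fin]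

lemma factorial_pos_real (n : ℕ) : (0:ℝ) < (n.factorial : ℝ) := by
  exact_mod_cast n.factorial_pos

lemma permVar_eq {n : ℕ} (f : Equiv.Perm (Fin n) → ℝ) :
    permVar f = (∑ π : Equiv.Perm (Fin n), (f π) ^ 2) / (n.factorial : ℝ)
      - ((∑ π : Equiv.Perm (Fin n), f π) / (n.factorial : ℝ)) ^ 2 := by
  unfold permVar permExp
  have hN : (0:ℝ) < (n.factorial : ℝ) := factorial_pos_real n
  set N := (n.factorial : ℝ)
  set E := (∑ π : Equiv.Perm (Fin n), f π) / N with hE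
  have hexp : ∀ π : Equiv.Perm (Fin n), (f π - E) ^ 2
      = (f π)^2 - 2 * E * f π + E^2 := fun π => by ring
  rw [Finset.sum_congr rfl (fun π _ => hexp π), Finset.sum_add_distrib,
    Finset.sum_sub_distrib, ← Finset.mul_sum, Finset.sum_const, card_perm_fin, nsmul_eq_mul]
  rw [hE]
  field_simp
  ring

lemma Xstat_eq_neg_sum_srow {n : ℕ} (π : Equiv.Perm (Fin n)) :
    Xstat (invMat n) π = - ∑ i : Fin n, Srow i π := by
  unfold Xstat Srow
  rw [Finset.sum_filter, Fintype.sum_prod_type]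
  rw [← Finset.sum_neg_distrib]
  apply Finset.sum_congr rfl
  intro i _
  rw [← Finset.sum_neg_distrib, Finset.sum_filter]
  apply Finset.sum_congr rfl
  intro q _
  by_cases h : i < q
  · rw [if_pos h, if_pos h, invMat_antisymm]
  · rw [if_neg h, if_neg h]

lemma srow_abs_le {n : ℕ} (i : Fin n) (π : Equiv.Perm (Fin n)) : |Srow i π| ≤ n := by
  unfold Srow
  calc |∑ q ∈ Finset.univ.filter (fun q => i < q), invMat n (π q) (π i)|
      ≤ ∑ q ∈ Finset.univ.filter (fun q => i < q), |invMat n (π q) (π i)| :=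
        Finset.abs_sum_le_sum_abs _ _
    _ ≤ ∑ q ∈ Finset.univ.filter (fun q => i < q), 1 := by
        apply Finset.sum_le_sum
        intro q _
        unfold invMat
        split_ifs <;> simp
    _ = (Finset.univ.filter (fun q : Fin n => i < q)).card := by rw [Finset.sum_const]; simp
    _ ≤ (Finset.univ : Finset (Fin n)).card := by
        exact_mod_cast Finset.card_le_card (Finset.filter_subset _ _)
    _ = n := by simp

/-- `aR i = m(m+2)/3` with `m = n-1-i`: the variance of `Srow i`. -/
noncomputable def aR {n : ℕ} (i : Fin n) : ℝ :=
  ((n - 1 - i.val : ℕ) : ℝ) * (((n - 1 - i.val : ℕ) : ℝ) + 2) / 3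

lemma aR_nonneg {n : ℕ} (i : Fin n) : 0 ≤ aR i := by
  unfold aR
  positivity

lemma sum_sq_srow {n : ℕ} (i : Fin n) :
    ∑ π : Equiv.Perm (Fin n), (Srow i π) ^ 2 = (n.factorial : ℝ) * aR i :=
  srow_second_moment i

lemma offdiag_lin {n : ℕ} {i j : Fin n} (hij : i ≠ j) :
    ∑ π : Equiv.Perm (Fin n), Srow i π * Srow j π = 0 := by
  have hfac : (n.factorial : ℝ) ≠ 0 := ne_of_gt (factorial_pos_real n)
  rcases lt_or_gt_of_ne hij with h | h
  · have := claimB h id id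
    simp only [id] at this
    rw [srow_first_moment, srow_first_moment, mul_zero] at this
    exact (mul_eq_zero.mp this).resolve_left hfac
  · have := claimB h id id
    simp only [id] at this
    rw [srow_first_moment, srow_first_moment, mul_zero] at this
    have h0 := (mul_eq_zero.mp this).resolve_left hfac
    rw [← h0]
    exact Finset.sum_congr rfl (fun π _ => mul_comm _ _)

lemma offdiag_sq {n : ℕ} {i j : Fin n} (hij : i ≠ j) :
    ∑ π : Equiv.Perm (Fin n), (Srow i π) ^ 2 * (Srow j π) ^ 2
      = (n.factorial : ℝ) * (aR i * aR j) := by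
  have hfac : (n.factorial : ℝ) ≠ 0 := ne_of_gt (factorial_pos_real n)
  apply mul_left_cancel₀ hfac
  rcases lt_or_gt_of_ne hij with h | h
  · have := claimB h (fun x => x ^ 2) (fun x => x ^ 2)
    rw [this, sum_sq_srow, sum_sq_srow]
    ring
  · have := claimB h (fun x => x ^ 2) (fun x => x ^ 2)
    rw [show ∑ π : Equiv.Perm (Fin n), (Srow i π) ^ 2 * (Srow j π) ^ 2
      = ∑ π : Equiv.Perm (Fin n), (Srow j π) ^ 2 * (Srow i π) ^ 2 from
      Finset.sum_congr rfl (fun π _ => mul_comm _ _)]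
    rw [this, sum_sq_srow, sum_sq_srow]
    ring

lemma sumX_zero {n : ℕ} : ∑ π : Equiv.Perm (Fin n), Xstat (invMat n) π = 0 := by
  rw [Finset.sum_congr rfl (fun π _ => Xstat_eq_neg_sum_srow π), Finset.sum_neg_distrib]
  rw [show (0:ℝ) = - 0 from by ring]
  congr 1
  rw [Finset.sum_comm]
  rw [Finset.sum_congr rfl (fun i _ => srow_first_moment i), Finset.sum_const]
  simp

lemma sumX_sq {n : ℕ} :
    ∑ π : Equiv.Perm (Fin n), (Xstat (invMat n) π) ^ 2
      = (n.factorial : ℝ) * ∑ i : Fin n, aR i := by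
  have hptw : ∀ π : Equiv.Perm (Fin n), (Xstat (invMat n) π) ^ 2
      = ∑ i : Fin n, ∑ j : Fin n, Srow i π * Srow j π := by
    intro π
    rw [Xstat_eq_neg_sum_srow, neg_sq, sq, Finset.sum_mul_sum]
  rw [Finset.sum_congr rfl (fun π _ => hptw π), Finset.sum_comm]
  have hin : ∀ i : Fin n, ∑ π : Equiv.Perm (Fin n), ∑ j : Fin n, Srow i π * Srow j π
      = (n.factorial : ℝ) * aR i := by
    intro i
    rw [Finset.sum_comm]
    rw [Finset.sum_eq_single_of_mem i (Finset.mem_univ i)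
      (fun j _ hj => offdiag_lin (Ne.symm hj))]
    rw [← sum_sq_srow i]
    exact Finset.sum_congr rfl (fun π _ => (sq (Srow i π)).symm)
  rw [Finset.sum_congr rfl (fun i _ => hin i), ← Finset.mul_sum]

lemma varX_eq {n : ℕ} : permVar (Xstat (invMat n)) = ∑ i : Fin n, aR i := by
  rw [permVar_eq, sumX_zero, sumX_sq]
  have hfac : (n.factorial : ℝ) ≠ 0 := ne_of_gt (factorial_pos_real n)
  field_simp
  simp

lemma sum_aR_ge {n : ℕ} (hn : 2 ≤ n) : ((n:ℝ))^3 / 36 ≤ ∑ i : Fin n, aR i := by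
  have h1 : ∀ i : Fin n, ((n - 1 - i.val : ℕ) : ℝ)^2 / 3 ≤ aR i := by
    intro i
    unfold aR
    have : (0:ℝ) ≤ ((n - 1 - i.val : ℕ) : ℝ) := Nat.cast_nonneg _
    nlinarith
  have h2 : ∑ i : Fin n, ((n - 1 - i.val : ℕ) : ℝ)^2 / 3 ≤ ∑ i : Fin n, aR i :=
    Finset.sum_le_sum (fun i _ => h1 i)
  have h3 : ∑ i : Fin n, ((n - 1 - i.val : ℕ) : ℝ)^2 / 3
      = (∑ k ∈ Finset.range n, ((k:ℕ):ℝ)^2) / 3 := by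
    rw [← Finset.sum_div]
    congr 1
    rw [Fin.sum_univ_eq_sum_range (fun k => ((n - 1 - k : ℕ) : ℝ)^2) n]
    exact Finset.sum_range_reflect (fun k => ((k:ℕ):ℝ)^2) n
  rw [h3, sum_range_sq_cast n] at h2
  have hn' : (2:ℝ) ≤ (n:ℝ) := by exact_mod_cast hn
  have key : (0:ℝ) ≤ (n:ℝ) * (3*(n:ℝ)^2 - 6*(n:ℝ) + 2) := by nlinarith
  nlinarith [h2, key]

lemma pointwise_S4 {n : ℕ} (i : Fin n) (π : Equiv.Perm (Fin n)) :
    (Srow i π)^2 * (Srow i π)^2 ≤ (n:ℝ)^4 := by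
  have h := srow_abs_le i π
  have h0 : (0:ℝ) ≤ |Srow i π| := abs_nonneg _
  have hsq : (Srow i π)^2 ≤ (n:ℝ)^2 := by
    rw [← sq_abs]
    nlinarith
  nlinarith [sq_nonneg (Srow i π)]

lemma varF_le {n : ℕ} (hn : 2 ≤ n) :
    permVar (fun π : Equiv.Perm (Fin n) =>
        (1 / (n : ℝ)) * ∑ i : Fin n,
          (Xstat (invMat n) (π * cyc i) - Xstat (invMat n) π) ^ 2)
      ≤ 16 * (n:ℝ)^3 := by
  have hnR : (0:ℝ) < (n:ℝ) := by
    have : 0 < n := by omega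
    exact_mod_cast this
  have hfac : (0:ℝ) < (n.factorial : ℝ) := factorial_pos_real n
  set f : Equiv.Perm (Fin n) → ℝ := fun π =>
    (1 / (n : ℝ)) * ∑ i : Fin n,
      (Xstat (invMat n) (π * cyc i) - Xstat (invMat n) π) ^ 2 with hfdef
  have hf : ∀ π, f π = (4 / (n:ℝ)) * ∑ i : Fin n, (Srow i π)^2 := by
    intro π
    rw [hfdef]
    simp only []
    rw [Finset.sum_congr rfl (fun i _ =>
      show (Xstat (invMat n) (π * cyc i) - Xstat (invMat n) π)^2 = 4 * (Srow i π)^2 from by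
        rw [Xdiff π i]; ring)]
    rw [← Finset.mul_sum]
    ring
  have h1 : ∑ π : Equiv.Perm (Fin n), f π
      = (4 / (n:ℝ)) * ((n.factorial : ℝ) * ∑ i : Fin n, aR i) := by
    rw [Finset.sum_congr rfl (fun π _ => hf π), ← Finset.mul_sum, Finset.sum_comm]
    rw [Finset.sum_congr rfl (fun i _ => sum_sq_srow i), ← Finset.mul_sum]
  have h2 : ∑ π : Equiv.Perm (Fin n), (f π)^2
      = (16 / (n:ℝ)^2) * ∑ i : Fin n, ∑ j : Fin n,
          ∑ π : Equiv.Perm (Fin n), (Srow i π)^2 * (Srow j π)^2 := by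
    have hptw : ∀ π, (f π)^2 = (16 / (n:ℝ)^2) * ∑ i : Fin n, ∑ j : Fin n,
        (Srow i π)^2 * (Srow j π)^2 := by
      intro π
      rw [hf π, mul_pow, ← Finset.sum_mul_sum]
      rw [show ((4 / (n:ℝ))^2) = 16 / (n:ℝ)^2 by ring]
      ring
    rw [Finset.sum_congr rfl (fun π _ => hptw π), ← Finset.mul_sum, Finset.sum_comm]
    congr 1
    apply Finset.sum_congr rfl
    intro i _
    rw [Finset.sum_comm]
  rw [permVar_eq, h1, h2]
  have hA2 : ((16 / (n:ℝ)^2) * ∑ i : Fin n, ∑ j : Fin n,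
      ∑ π : Equiv.Perm (Fin n), (Srow i π)^2 * (Srow j π)^2) / (n.factorial : ℝ)
      = (16 / (n:ℝ)^2) * ∑ i : Fin n, ∑ j : Fin n,
        (∑ π : Equiv.Perm (Fin n), (Srow i π)^2 * (Srow j π)^2) / (n.factorial : ℝ) := by
    rw [mul_div_assoc, Finset.sum_div]
    congr 1
    apply Finset.sum_congr rfl
    intro i _
    rw [Finset.sum_div]
  have hA1 : ((4 / (n:ℝ)) * ((n.factorial : ℝ) * ∑ i : Fin n, aR i) / (n.factorial : ℝ))^2
      = (16 / (n:ℝ)^2) * ∑ i : Fin n, ∑ j : Fin n, aR i * aR j := by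
    rw [← Finset.sum_mul_sum]
    field_simp
    ring
  rw [hA2, hA1, ← mul_sub, ← Finset.sum_sub_distrib]
  rw [Finset.sum_congr rfl (fun i _ => (Finset.sum_sub_distrib
    (f := fun j => (∑ π : Equiv.Perm (Fin n), (Srow i π)^2 * (Srow j π)^2) / (n.factorial : ℝ))
    (g := fun j => aR i * aR j)).symm)]
  have hbound : ∀ i : Fin n, ∑ j : Fin n,
      ((∑ π : Equiv.Perm (Fin n), (Srow i π)^2 * (Srow j π)^2) / (n.factorial : ℝ)
        - aR i * aR j) ≤ (n:ℝ)^4 := by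
    intro i
    have hterm : ∀ j : Fin n,
        (∑ π : Equiv.Perm (Fin n), (Srow i π)^2 * (Srow j π)^2) / (n.factorial : ℝ)
          - aR i * aR j ≤ if i = j then (n:ℝ)^4 else 0 := by
      intro j
      by_cases h : i = j
      · subst h
        rw [if_pos rfl]
        have hb : ∑ π : Equiv.Perm (Fin n), (Srow i π)^2 * (Srow i π)^2
            ≤ (n.factorial : ℝ) * (n:ℝ)^4 := by
          calc ∑ π : Equiv.Perm (Fin n), (Srow i π)^2 * (Srow i π)^2
              ≤ ∑ _π : Equiv.Perm (Fin n), (n:ℝ)^4 :=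
                Finset.sum_le_sum (fun π _ => pointwise_S4 i π)
            _ = (n.factorial : ℝ) * (n:ℝ)^4 := by
                rw [Finset.sum_const, card_perm_fin, nsmul_eq_mul]
        have hdiv : (∑ π : Equiv.Perm (Fin n), (Srow i π)^2 * (Srow i π)^2)
            / (n.factorial : ℝ) ≤ (n:ℝ)^4 := by
          rw [div_le_iff₀ hfac]
          nlinarith
        nlinarith [mul_nonneg (aR_nonneg i) (aR_nonneg i)]
      · rw [if_neg h, offdiag_sq h]
        rw [mul_comm, mul_div_assoc, div_self (ne_of_gt hfac), mul_one]
        simp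
    calc ∑ j : Fin n, ((∑ π : Equiv.Perm (Fin n), (Srow i π)^2 * (Srow j π)^2)
          / (n.factorial : ℝ) - aR i * aR j)
        ≤ ∑ j : Fin n, (if i = j then (n:ℝ)^4 else 0) :=
          Finset.sum_le_sum (fun j _ => hterm j)
      _ = (n:ℝ)^4 := by simp
  calc (16 / (n:ℝ)^2) * ∑ i : Fin n, ∑ j : Fin n,
        ((∑ π : Equiv.Perm (Fin n), (Srow i π)^2 * (Srow j π)^2) / (n.factorial : ℝ)
          - aR i * aR j)
      ≤ (16 / (n:ℝ)^2) * ∑ _i : Fin n, (n:ℝ)^4 := by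
        apply mul_le_mul_of_nonneg_left
        · exact Finset.sum_le_sum (fun i _ => hbound i)
        · positivity
    _ = (16 / (n:ℝ)^2) * ((n:ℝ) * (n:ℝ)^4) := by
        rw [Finset.sum_const, nsmul_eq_mul]
        simp
    _ = 16 * (n:ℝ)^3 := by field_simp


theorem var_condexp_sq_diff_inversions_aux :
    ∃ B : ℝ, 0 < B ∧ ∀ n : ℕ, 2 ≤ n →
      permVar (fun π : Equiv.Perm (Fin n) =>
          (1 / (n : ℝ)) * ∑ i : Fin n,
            (Xstat (invMat n) (π * cyc i) - Xstat (invMat n) π) ^ 2)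
        ≤ B * (permVar (Xstat (invMat n))) ^ 2 / (n : ℝ) ^ 3 := by
  refine ⟨20736, by norm_num, ?_⟩
  intro n hn
  have hn0 : (0:ℝ) < (n:ℝ) := by
    have : 0 < n := by omega
    exact_mod_cast this
  have hn3 : (0:ℝ) < (n:ℝ)^3 := by positivity
  have hVX : ((n:ℝ))^3 / 36 ≤ permVar (Xstat (invMat n)) := by
    rw [varX_eq]
    exact sum_aR_ge hn
  have hV0 : (0:ℝ) ≤ permVar (Xstat (invMat n)) := le_trans (by positivity) hVX
  refine le_trans (varF_le hn) ?_
  rw [le_div_iff₀ hn3]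
  have hsq : (((n:ℝ))^3 / 36)^2 ≤ (permVar (Xstat (invMat n)))^2 :=
    pow_le_pow_left₀ (by positivity) hVX 2
  nlinarith [hsq]

end AuxVarCondexp

/-- For the inversion matrix, setting
`F(π) = (1/n) ∑_{i=1}^n (X(π∘c_i) − X(π))²`, there is a universal constant `B > 0` with
`Var(F) ≤ B·Var(X)²/n³` for all `n ≥ 2`
(i.e. `Var(E^π(W'−W)²) ≤ B/n³` for the normalized pair). -/
theorem var_condexp_sq_diff_inversions :
    ∃ B : ℝ, 0 < B ∧ ∀ n : ℕ, 2 ≤ n →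
      permVar (fun π : Equiv.Perm (Fin n) =>
          (1 / (n : ℝ)) * ∑ i : Fin n,
            (Xstat (invMat n) (π * cyc i) - Xstat (invMat n) π) ^ 2)
        ≤ B * (permVar (Xstat (invMat n))) ^ 2 / (n : ℝ) ^ 3 := by
  exact var_condexp_sq_diff_inversions_aux
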